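/- arXiv:0901.4830 — 4 statements merged into one kernel-verified Lean document; each statement's English description precedes it below -/
import Mathlib

section
/- Suppose S₀ is Hermitian positive semidefinite with tr(S₀) ≤ P and S₀ attains the maximum of the secrecy objective f(S) = min over i = 1,…,K of [ log det(I + H_sᴴ S H_s) − log(1 + (h_iᴴ S h_i)/σ_i²) ] over the feasible set 𝒮 = { S : S Hermitian PSD, tr(S) ≤ P }. Set Γ̄_i = h_iᴴ S₀ h_i for each i. Then S₀ also attains the maximum of log det(I + H_sᴴ S H_s) over the set { S : S Hermitian PSD, tr(S) ≤ P, h_iᴴ S h_i ≤ Γ̄_i for all i = 1,…,K }; that is, for every Hermitian PSD S with tr(S) ≤ P and h_iᴴ S h_i ≤ Γ̄_i for all i, one has det(I + H_sᴴ S H_s) ≤ det(I + H_sᴴ S₀ H_s). -/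
open Matrix ComplexOrder

/-- The (real) quadratic form `hᴴ S h`. -/
noncomputable def quadForm {N : ℕ} (h : Fin N → ℂ) (S : Matrix (Fin N) (Fin N) ℂ) : ℝ :=
  (star h ⬝ᵥ S.mulVec h).re

/-- The (real) value `det(I + Hsᴴ S Hs)`. -/
noncomputable def detVal {N M : ℕ} (Hs : Matrix (Fin N) (Fin M) ℂ)
    (S : Matrix (Fin N) (Fin N) ℂ) : ℝ :=
  ((1 + Hs.conjTranspose * S * Hs).det).re

lemma detVal_pos {N M : ℕ} (Hs : Matrix (Fin N) (Fin M) ℂ)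
    {S : Matrix (Fin N) (Fin N) ℂ} (hS : S.PosSemidef) : 0 < detVal Hs S := by
  have hpd : (1 + Hs.conjTranspose * S * Hs).PosDef :=
    Matrix.PosDef.add_posSemidef Matrix.PosDef.one (hS.conjTranspose_mul_mul_same Hs)
  have := hpd.det_pos
  rw [Complex.lt_def] at this
  exact this.1

lemma quadForm_nonneg {N : ℕ} (h : Fin N → ℂ) {S : Matrix (Fin N) (Fin N) ℂ}
    (hS : S.PosSemidef) : 0 ≤ quadForm h S :=
  hS.re_dotProduct_nonneg h

theorem stmt_0 (N M K : ℕ) [NeZero K] (hN : 0 < N) (hM : 0 < M)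
    (P : ℝ) (hP : 0 < P) (σ : Fin K → ℝ) (hσ : ∀ i, 0 < σ i)
    (Hs : Matrix (Fin N) (Fin M) ℂ) (h : Fin K → Fin N → ℂ)
    (S₀ : Matrix (Fin N) (Fin N) ℂ) (hS₀ : S₀.PosSemidef) (htr₀ : S₀.trace.re ≤ P)
    (hopt : ∀ S : Matrix (Fin N) (Fin N) ℂ, S.PosSemidef → S.trace.re ≤ P →
      (⨅ i : Fin K, (Real.log (detVal Hs S) - Real.log (1 + quadForm (h i) S / (σ i) ^ 2))) ≤
      (⨅ i : Fin K, (Real.log (detVal Hs S₀) - Real.log (1 + quadForm (h i) S₀ / (σ i) ^ 2)))) :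
    ∀ S : Matrix (Fin N) (Fin N) ℂ, S.PosSemidef → S.trace.re ≤ P →
      (∀ i, quadForm (h i) S ≤ quadForm (h i) S₀) →
      detVal Hs S ≤ detVal Hs S₀ := by
  intro S hS htr hq
  by_contra hlt
  push_neg at hlt
  set f : Fin K → ℝ := fun i => Real.log (detVal Hs S) - Real.log (1 + quadForm (h i) S / (σ i) ^ 2)
  set g : Fin K → ℝ := fun i => Real.log (detVal Hs S₀) - Real.log (1 + quadForm (h i) S₀ / (σ i) ^ 2)
  set ε : ℝ := Real.log (detVal Hs S) - Real.log (detVal Hs S₀) with hε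
  have hεpos : 0 < ε :=
    sub_pos.mpr (Real.log_lt_log (detVal_pos Hs hS₀) hlt)
  have hkey : ∀ i, g i + ε ≤ f i := by
    intro i
    have hσ2 : 0 < (σ i) ^ 2 := pow_pos (hσ i) 2
    have h1 : 0 < 1 + quadForm (h i) S / (σ i) ^ 2 := by
      have := quadForm_nonneg (h i) hS
      positivity
    have hle : Real.log (1 + quadForm (h i) S / (σ i) ^ 2) ≤
        Real.log (1 + quadForm (h i) S₀ / (σ i) ^ 2) := by
      apply Real.log_le_log h1
      have := hq i
      gcongr
    simp only [f, g, hε]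
    linarith
  have hbdd : BddBelow (Set.range g) := (Set.finite_range g).bddBelow
  have h1 : (⨅ i, g i) + ε ≤ ⨅ i, f i := by
    apply le_ciInf
    intro i
    exact le_trans (by gcongr; exact ciInf_le hbdd i) (hkey i)
  have := hopt S hS htr
  simp only [f, g] at h1
  linarith
end

section
/- Let S be an N×N Hermitian positive semidefinite complex matrix and H an N×N_e complex matrix, and set L = min(N_e, N). If tr(Hᴴ S H) ≤ Γ for some real Γ ≥ 0, then det(I + Hᴴ S H) ≤ (1 + Γ/L)^L. -/
/-!
Writing `Hᴴ S H = Bᴴ B` with `B = S^{1/2} H`, the Weinstein–Aronszajn identity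
`det (1 + Bᴴ B) = det (1 + B Bᴴ)` and `tr (Bᴴ B) = tr (B Bᴴ)` let us work with whichever of the
two positive semidefinite matrices has the smaller size `L`. For such a matrix with eigenvalues
`μ i ≥ 0`, `det (1 + A) = ∏ (1 + μ i)`, and AM-GM bounds this by `(1 + ∑ μ i / L) ^ L`.
-/

open Matrix ComplexOrder
open scoped MatrixOrder

open Finset in
theorem Real.prod_le_sum_div_card_pow {ι : Type*} (s : Finset ι) {z : ι → ℝ}
    (hz : ∀ i ∈ s, 0 ≤ z i) : ∏ i ∈ s, z i ≤ ((∑ i ∈ s, z i) / #s) ^ #s := by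
  rcases s.eq_empty_or_nonempty with rfl | hs
  · simp
  have hprod : 0 ≤ ∏ i ∈ s, z i := prod_nonneg hz
  have hmean : (∏ i ∈ s, z i) ^ ((#s : ℝ)⁻¹) ≤ (∑ i ∈ s, z i) / #s := by
    simpa using Real.geom_mean_le_arith_mean s 1 z (fun _ _ => zero_le_one)
      (by simpa using hs) hz
  calc ∏ i ∈ s, z i = ((∏ i ∈ s, z i) ^ ((#s : ℝ)⁻¹)) ^ #s :=
        (Real.rpow_inv_natCast_pow hprod hs.card_ne_zero).symm
    _ ≤ _ := by gcongr

namespace Matrix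

variable {𝕜 : Type*} [RCLike 𝕜] {m n : Type*} [Fintype m] [DecidableEq m]

theorem PosSemidef.conjTranspose_mul_mul_same_eq_sqrt {S : Matrix m m 𝕜} (hS : S.PosSemidef)
    (H : Matrix m n 𝕜) : Hᴴ * S * H = (CFC.sqrt S * H)ᴴ * (CFC.sqrt S * H) := by
  rw [conjTranspose_mul, (CFC.sqrt_nonneg S).posSemidef.1.eq]
  simp only [Matrix.mul_assoc]
  rw [← Matrix.mul_assoc (CFC.sqrt S), CFC.sqrt_mul_sqrt_self S hS.nonneg]

variable [Fintype n] [DecidableEq n]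

theorem IsHermitian.det_one_add {A : Matrix n n 𝕜} (hA : A.IsHermitian) :
    det (1 + A) = ∏ i, ((1 + hA.eigenvalues i : ℝ) : 𝕜) := by
  have hcfc : 1 + A = cfc (fun x : ℝ => 1 + x) A := by
    rw [cfc_add .., cfc_const_one .., cfc_id' ..]
  rw [hcfc, hA.cfc_eq]
  simp [IsHermitian.cfc, -Unitary.conjStarAlgAut_apply]

theorem PosSemidef.re_det_one_add_le {A : Matrix n n 𝕜} (hA : A.PosSemidef) {Γ : ℝ}
    (htr : RCLike.re A.trace ≤ Γ) :
    RCLike.re (det (1 + A)) ≤ (1 + Γ / Fintype.card n) ^ Fintype.card n := by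
  rcases isEmpty_or_nonempty n with hn | hn
  · simp
  set μ := hA.isHermitian.eigenvalues
  have hμ : ∀ i, 0 ≤ μ i := hA.eigenvalues_nonneg
  have hdet : RCLike.re (det (1 + A)) = ∏ i, (1 + μ i) := by
    rw [hA.isHermitian.det_one_add, ← RCLike.ofReal_prod, RCLike.ofReal_re]
  have htrace : ∑ i, μ i ≤ Γ := by
    rwa [hA.isHermitian.trace_eq_sum_eigenvalues, ← RCLike.ofReal_sum, RCLike.ofReal_re] at htr
  have hcard : (Fintype.card n : ℝ) ≠ 0 := by simp
  have hmean : (∑ i, (1 + μ i)) / Fintype.card n = 1 + (∑ i, μ i) / Fintype.card n := by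
    rw [Finset.sum_add_distrib, Finset.sum_const, Finset.card_univ, nsmul_eq_mul, mul_one]
    field_simp
  calc RCLike.re (det (1 + A)) = ∏ i, (1 + μ i) := hdet
    _ ≤ (1 + (∑ i, μ i) / Fintype.card n) ^ Fintype.card n := by
      rw [← hmean]
      exact Real.prod_le_sum_div_card_pow _ fun i _ => by linarith [hμ i]
    _ ≤ (1 + Γ / Fintype.card n) ^ Fintype.card n := by
      have : 0 ≤ ∑ i, μ i := Finset.sum_nonneg fun i _ => hμ i
      gcongr

theorem re_det_one_add_conjTranspose_mul_self_le (B : Matrix m n 𝕜) {Γ : ℝ}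
    (htr : RCLike.re (Bᴴ * B).trace ≤ Γ) :
    RCLike.re (det (1 + Bᴴ * B)) ≤
      (1 + Γ / (min (Fintype.card n) (Fintype.card m) : ℕ)) ^
        min (Fintype.card n) (Fintype.card m) := by
  rcases le_total (Fintype.card n) (Fintype.card m) with h | h
  · rw [min_eq_left h]
    exact (posSemidef_conjTranspose_mul_self B).re_det_one_add_le htr
  · rw [min_eq_right h, det_one_add_mul_comm]
    rw [trace_mul_comm] at htr
    exact (posSemidef_self_mul_conjTranspose B).re_det_one_add_le htr

end Matrix

theorem stmt_7_general (N Ne : ℕ)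
    (S : Matrix (Fin N) (Fin N) ℂ) (hS : S.PosSemidef)
    (H : Matrix (Fin N) (Fin Ne) ℂ) (Γ : ℝ)
    (htr : ((H.conjTranspose * S * H).trace).re ≤ Γ) :
    ((1 + H.conjTranspose * S * H).det).re ≤ (1 + Γ / (min Ne N : ℝ)) ^ (min Ne N) := by
  rw [hS.conjTranspose_mul_mul_same_eq_sqrt] at htr ⊢
  simpa using re_det_one_add_conjTranspose_mul_self_le (𝕜 := ℂ) _ htr

theorem stmt_7 (N Ne : ℕ) (hN : 0 < N) (hNe : 0 < Ne)
    (S : Matrix (Fin N) (Fin N) ℂ) (hS : S.PosSemidef)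
    (H : Matrix (Fin N) (Fin Ne) ℂ) (Γ : ℝ) (hΓ : 0 ≤ Γ)
    (htr : ((H.conjTranspose * S * H).trace).re ≤ Γ) :
    ((1 + H.conjTranspose * S * H).det).re ≤ (1 + Γ / (min Ne N : ℝ)) ^ (min Ne N) :=
  stmt_7_general N Ne S hS H Γ htr
end

section
/- Let σ > 0 and let g : ℝ → ℝ be concave on [0,∞). Let Γ* ≥ 0 and suppose g has derivative γ(Γ*) at Γ* within [0,∞) (a right-derivative when Γ* = 0). If γ(Γ*)·(1 + Γ*/σ²) = g(Γ*)/σ², then Γ* is a global maximizer of F(Γ) = g(Γ)/(1 + Γ/σ²) over [0,∞): for every Γ ≥ 0, g(Γ)/(1 + Γ/σ²) ≤ g(Γ*)/(1 + Γ*/σ²). -/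
/-!
A concave function lies below its tangent line at `Γstar`, and the stationarity condition says
exactly that this tangent line is `Γ ↦ g Γstar / (1 + Γstar / σ ^ 2) * (1 + Γ / σ ^ 2)`, the line
through `(Γstar, g Γstar)` and `(-σ ^ 2, 0)`. Dividing by `1 + Γ / σ ^ 2 > 0` gives the bound.
-/

theorem ConcaveOn.le_add_mul_sub_of_hasDerivWithinAt {S : Set ℝ} {f : ℝ → ℝ} {x y f' : ℝ}
    (hf : ConcaveOn ℝ S f) (hx : x ∈ S) (hy : y ∈ S) (hf' : HasDerivWithinAt f f' S x) :
    f y ≤ f x + f' * (y - x) := by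
  rcases lt_trichotomy y x with hyx | rfl | hxy
  · have h := hf.le_slope_of_hasDerivWithinAt hy hx hyx hf'
    rw [slope_def_field, le_div_iff₀ (sub_pos.2 hyx)] at h
    linarith
  · simp
  · have h := hf.slope_le_of_hasDerivWithinAt hx hy hxy hf'
    rw [slope_def_field, div_le_iff₀ (sub_pos.2 hxy)] at h
    linarith

theorem add_mul_sub_eq_div_mul_of_mul_one_add_div_eq {s a γ x y : ℝ}
    (hx : 1 + x / s ≠ 0) (h : γ * (1 + x / s) = a / s) :
    a + γ * (y - x) = a / (1 + x / s) * (1 + y / s) := by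
  rcases eq_or_ne s 0 with rfl | hs
  · simp_all
  have hγ : γ * (s + x) = a := by
    field_simp at h
    linarith
  have hx' : s + x ≠ 0 := by
    contrapose! hx
    field_simp
    linarith
  field_simp
  linear_combination (y - x) * hγ

theorem stmt_11_general (σ : ℝ) (g : ℝ → ℝ)
    (hg : ConcaveOn ℝ (Set.Ici (0 : ℝ)) g)
    (Γstar γ : ℝ) (hΓstar : 0 ≤ Γstar)
    (hderiv : HasDerivWithinAt g γ (Set.Ici (0 : ℝ)) Γstar)
    (hcond : γ * (1 + Γstar / σ ^ 2) = g Γstar / σ ^ 2) :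
    ∀ Γ : ℝ, 0 ≤ Γ → g Γ / (1 + Γ / σ ^ 2) ≤ g Γstar / (1 + Γstar / σ ^ 2) := by
  intro Γ hΓ
  have hΓstar_ne : 1 + Γstar / σ ^ 2 ≠ 0 := by positivity
  rw [div_le_iff₀ (by positivity),
    ← add_mul_sub_eq_div_mul_of_mul_one_add_div_eq hΓstar_ne hcond]
  exact hg.le_add_mul_sub_of_hasDerivWithinAt hΓstar hΓ hderiv

theorem stmt_11 (σ : ℝ) (hσ : 0 < σ) (g : ℝ → ℝ)
    (hg : ConcaveOn ℝ (Set.Ici (0 : ℝ)) g)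
    (Γstar γ : ℝ) (hΓstar : 0 ≤ Γstar)
    (hderiv : HasDerivWithinAt g γ (Set.Ici (0 : ℝ)) Γstar)
    (hcond : γ * (1 + Γstar / σ ^ 2) = g Γstar / σ ^ 2) :
    ∀ Γ : ℝ, 0 ≤ Γ → g Γ / (1 + Γ / σ ^ 2) ≤ g Γstar / (1 + Γstar / σ ^ 2) :=
  stmt_11_general σ g hg Γstar γ hΓstar hderiv hcond
end

section
/- Suppose S is an N×N Hermitian positive semidefinite complex matrix, δ ≥ 0 and γ_1,…,γ_K ≥ 0 are real numbers, and the following KKT conditions hold: (i) primal feasibility: tr(S) ≤ P and h_iᴴ S h_i ≤ Γ_i for all i; (ii) stationarity: det(I + H_sᴴ S H_s) · H_s (I + H_sᴴ S H_s)^{-1} H_sᴴ = δ·I + Σ_{i=1}^K γ_i · h_i h_iᴴ as N×N matrices; (iii) complementary slackness: δ·(tr(S) − P) = 0 and γ_i·(h_iᴴ S h_i − Γ_i) = 0 for all i. Then S is a global maximizer of the (non-convex) problem: for every Hermitian PSD matrix S' with tr(S') ≤ P and h_iᴴ S' h_i ≤ Γ_i for all i, det(I + H_sᴴ S' H_s)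 ≤ det(I + H_sᴴ S H_s). -/
open Matrix ComplexOrder

/-! Let A = I + Hsᴴ S Hs. Stationarity says that det A · tr(A⁻¹ Hsᴴ T Hs), the derivative of
T ↦ det(I + Hsᴴ T Hs) at S in the direction T, equals the multiplier-weighted constraint value
δ tr T + Σ γᵢ hᵢᴴ T hᵢ, and by complementary slackness this value at a feasible S' is at most its
value at S. Hence tr(A⁻¹ A') ≤ M for A' = I + Hsᴴ S' Hs, and AM–GM for the eigenvalues of
A^{-1/2} A' A^{-1/2} gives det A' ≤ det A. -/

lemma Real.prod_le_one_of_sum_le_card {ι : Type*} [Fintype ι] {μ : ι → ℝ} (hμ : ∀ i, 0 ≤ μ i)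
    (hsum : ∑ i, μ i ≤ Fintype.card ι) : ∏ i, μ i ≤ 1 :=
  calc ∏ i, μ i ≤ ∏ i, Real.exp (μ i - 1) :=
        Finset.prod_le_prod (fun i _ => hμ i) fun i _ => by linarith [Real.add_one_le_exp (μ i - 1)]
    _ = Real.exp (∑ i, μ i - Fintype.card ι) := by
        rw [← Real.exp_sum, Finset.sum_sub_distrib]; simp
    _ ≤ 1 := Real.exp_le_one_iff.2 (by linarith)

namespace Matrix

lemma mul_trace_mul_eq_trace_smul_mul {m n R : Type*} [Fintype m] [Fintype n] [CommRing R]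
    (c : R) (H : Matrix n m R) (X : Matrix m m R) (G : Matrix m n R) (T : Matrix n n R) :
    c * (X * (G * T * H)).trace = ((c • (H * X * G)) * T).trace := by
  rw [smul_mul, trace_smul, smul_eq_mul]
  simp only [Matrix.mul_assoc]
  rw [trace_mul_comm H]
  simp only [Matrix.mul_assoc]

variable {n 𝕜 : Type*} [Fintype n] [DecidableEq n] [RCLike 𝕜]

lemma PosSemidef.det_le_one_of_trace_le_card {C : Matrix n n 𝕜} (hC : C.PosSemidef)
    (htr : C.trace ≤ Fintype.card n) : C.det ≤ 1 := by
  rw [hC.isHermitian.trace_eq_sum_eigenvalues] at htr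
  rw [hC.isHermitian.det_eq_prod_eigenvalues]
  exact_mod_cast Real.prod_le_one_of_sum_le_card hC.eigenvalues_nonneg (by exact_mod_cast htr)

open scoped MatrixOrder in
lemma PosDef.det_le_of_trace_inv_mul_le_card {A B : Matrix n n 𝕜} (hA : A.PosDef)
    (hB : B.PosSemidef) (htr : (A⁻¹ * B).trace ≤ Fintype.card n) : B.det ≤ A.det := by
  -- Q = A^{-1/2}; conjugating B by Q preserves positivity and has the trace and determinant of A⁻¹ B
  set Q := CFC.sqrt A⁻¹
  have hQQ : Q * Q = A⁻¹ := CFC.sqrt_mul_sqrt_self _ hA.inv.posSemidef.nonneg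
  have hQ : Qᴴ = Q := (CFC.sqrt_nonneg A⁻¹).posSemidef.isHermitian.eq
  have hC : (Q * B * Q).PosSemidef := by
    simpa only [hQ] using hB.mul_mul_conjTranspose_same Q
  have hdet : B.det = A.det * (Q * B * Q).det := by
    rw [det_mul, det_mul, mul_right_comm, ← det_mul, hQQ, ← mul_assoc, ← det_mul,
      mul_nonsing_inv _ ((isUnit_iff_isUnit_det A).1 hA.isUnit), det_one, one_mul]
  calc B.det = A.det * (Q * B * Q).det := hdet
    _ ≤ A.det * 1 := by
        refine mul_le_mul_of_nonneg_left (hC.det_le_one_of_trace_le_card ?_) hA.det_pos.le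
        rwa [trace_mul_cycle, hQQ]
    _ = A.det := mul_one _

end Matrix

noncomputable def weightedConstraints {N K : ℕ} (δ : ℝ) (γ : Fin K → ℝ) (h : Fin K → Fin N → ℂ)
    (T : Matrix (Fin N) (Fin N) ℂ) : ℝ :=
  δ * T.trace.re + ∑ i, γ i * quadForm (h i) T

lemma Matrix.PosSemidef.trace_mul_eq_weightedConstraints {N K : ℕ} (δ : ℝ) (γ : Fin K → ℝ)
    (h : Fin K → Fin N → ℂ) {T : Matrix (Fin N) (Fin N) ℂ} (hT : T.PosSemidef) :
    (((δ : ℂ) • 1 + ∑ i, (γ i : ℂ) • vecMulVec (h i) (star (h i))) * T).trace =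
      weightedConstraints δ γ h T := by
  simp only [add_mul, Finset.sum_mul, smul_mul, one_mul, vecMulVec_mul, trace_add, trace_smul,
    trace_sum, trace_vecMulVec, dotProduct_comm (h _), ← dotProduct_mulVec]
  have hqf i : (quadForm (h i) T : ℂ) = star (h i) ⬝ᵥ T *ᵥ h i :=
    (Complex.eq_re_of_ofReal_le (hT.dotProduct_mulVec_nonneg _)).symm
  have htr : (T.trace.re : ℂ) = T.trace := (Complex.eq_re_of_ofReal_le hT.trace_nonneg).symm
  simp only [weightedConstraints, Complex.ofReal_add, Complex.ofReal_mul, Complex.ofReal_sum, hqf,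
    htr, smul_eq_mul]

lemma weightedConstraints_le_of_complementarySlackness {N K : ℕ} {P : ℝ} {Γ : Fin K → ℝ}
    {h : Fin K → Fin N → ℂ} {S S' : Matrix (Fin N) (Fin N) ℂ} {δ : ℝ} {γ : Fin K → ℝ}
    (hδ : 0 ≤ δ) (hγ : ∀ i, 0 ≤ γ i)
    (htr' : S'.trace.re ≤ P) (hit' : ∀ i, quadForm (h i) S' ≤ Γ i)
    (hcs₁ : δ * (S.trace.re - P) = 0) (hcs₂ : ∀ i, γ i * (quadForm (h i) S - Γ i) = 0) :
    weightedConstraints δ γ h S' ≤ weightedConstraints δ γ h S :=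
  add_le_add (by nlinarith) (Finset.sum_le_sum fun i _ => by nlinarith [hγ i, hit' i, hcs₂ i])

theorem stmt_13_general (N M K : ℕ)
    (P : ℝ) (Γ : Fin K → ℝ)
    (Hs : Matrix (Fin N) (Fin M) ℂ) (h : Fin K → Fin N → ℂ)
    (S : Matrix (Fin N) (Fin N) ℂ) (δ : ℝ) (γ : Fin K → ℝ)
    (hδ : 0 ≤ δ) (hγ : ∀ i, 0 ≤ γ i)
    -- (i) primal feasibility
    (hS : S.PosSemidef)
    -- (ii) stationarity
    (hstat : (1 + Hs.conjTranspose * S * Hs).det •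
        (Hs * (1 + Hs.conjTranspose * S * Hs)⁻¹ * Hs.conjTranspose) =
      (δ : ℂ) • (1 : Matrix (Fin N) (Fin N) ℂ) +
        ∑ i : Fin K, (γ i : ℂ) • Matrix.vecMulVec (h i) (star (h i)))
    -- (iii) complementary slackness
    (hcs₁ : δ * (S.trace.re - P) = 0)
    (hcs₂ : ∀ i, γ i * (quadForm (h i) S - Γ i) = 0) :
    ∀ S' : Matrix (Fin N) (Fin N) ℂ, S'.PosSemidef → S'.trace.re ≤ P →
      (∀ i, quadForm (h i) S' ≤ Γ i) →
      detVal Hs S' ≤ detVal Hs S := by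
  intro S' hS' htr' hit'
  set A := 1 + Hsᴴ * S * Hs
  have hA : A.PosDef := PosDef.one.add_posSemidef (hS.conjTranspose_mul_mul_same Hs)
  have hA' : (1 + Hsᴴ * S' * Hs).PosSemidef :=
    (PosDef.one.add_posSemidef (hS'.conjTranspose_mul_mul_same Hs)).posSemidef
  have hfirstOrder {T} (hT : T.PosSemidef) :
      A.det * (A⁻¹ * (Hsᴴ * T * Hs)).trace = weightedConstraints δ γ h T := by
    rw [mul_trace_mul_eq_trace_smul_mul, hstat, hT.trace_mul_eq_weightedConstraints]
  have hle : (A⁻¹ * (Hsᴴ * S' * Hs)).trace ≤ (A⁻¹ * (Hsᴴ * S * Hs)).trace := by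
    refine le_of_mul_le_mul_left ?_ hA.det_pos
    rw [hfirstOrder hS, hfirstOrder hS', Complex.real_le_real]
    exact weightedConstraints_le_of_complementarySlackness hδ hγ htr' hit' hcs₁ hcs₂
  have htrace : (A⁻¹ * (1 + Hsᴴ * S' * Hs)).trace ≤ (Fintype.card (Fin M) : ℂ) :=
    calc (A⁻¹ * (1 + Hsᴴ * S' * Hs)).trace = A⁻¹.trace + (A⁻¹ * (Hsᴴ * S' * Hs)).trace := by
          rw [Matrix.mul_add, Matrix.mul_one, trace_add]
      _ ≤ A⁻¹.trace + (A⁻¹ * (Hsᴴ * S * Hs)).trace := add_le_add_right hle _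
      _ = (A⁻¹ * A).trace := by rw [Matrix.mul_add, Matrix.mul_one, trace_add]
      _ = (Fintype.card (Fin M) : ℂ) := by
          rw [nonsing_inv_mul _ ((isUnit_iff_isUnit_det A).1 hA.isUnit), trace_one]
  exact (Complex.le_def.1 (hA.det_le_of_trace_inv_mul_le_card hA' htrace)).1

theorem stmt_13 (N M K : ℕ) (hN : 0 < N) (hM : 0 < M) (hK : 0 < K)
    (P : ℝ) (hP : 0 < P) (Γ : Fin K → ℝ) (hΓ : ∀ i, 0 ≤ Γ i)
    (Hs : Matrix (Fin N) (Fin M) ℂ) (h : Fin K → Fin N → ℂ)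
    (S : Matrix (Fin N) (Fin N) ℂ) (δ : ℝ) (γ : Fin K → ℝ)
    (hδ : 0 ≤ δ) (hγ : ∀ i, 0 ≤ γ i)
    -- (i) primal feasibility
    (hS : S.PosSemidef) (htr : S.trace.re ≤ P) (hit : ∀ i, quadForm (h i) S ≤ Γ i)
    -- (ii) stationarity
    (hstat : (1 + Hs.conjTranspose * S * Hs).det •
        (Hs * (1 + Hs.conjTranspose * S * Hs)⁻¹ * Hs.conjTranspose) =
      (δ : ℂ) • (1 : Matrix (Fin N) (Fin N) ℂ) +
        ∑ i : Fin K, (γ i : ℂ) • Matrix.vecMulVec (h i) (star (h i)))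
    -- (iii) complementary slackness
    (hcs₁ : δ * (S.trace.re - P) = 0)
    (hcs₂ : ∀ i, γ i * (quadForm (h i) S - Γ i) = 0) :
    ∀ S' : Matrix (Fin N) (Fin N) ℂ, S'.PosSemidef → S'.trace.re ≤ P →
      (∀ i, quadForm (h i) S' ≤ Γ i) →
      detVal Hs S' ≤ detVal Hs S :=
  stmt_13_general N M K P Γ Hs h S δ γ hδ hγ hS hstat hcs₁ hcs₂
end
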